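/- Let p be a real polynomial with deg p ≤ r, let c ∈ ℝ, let q(y) = c + ∫_{0}^{y} p(t) dt, and let F = p′ · q (where p′ is the derivative of p). Then deg F ≤ 2r, the coefficient of X^{2r} in F equals (r/(r+1)) · a^2 where a is the coefficient of X^r in p, and ∫_{−1}^{1} F(y) dy ≥ Σ_{k=1}^{r} A_k · F(G_k). -/

import Mathlib

/-!
`Leg r` is orthogonal on `[-1, 1]` to every polynomial of degree `< r`: integrate by parts `r`
times, the boundary terms vanishing because `(X² - 1)^r` has zeros of order `r` at `±1`. The Gauss
rule is exact in degree `< r` by Lagrange interpolation, hence in degree `< 2r` after division by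
`Leg r`. If `F` has degree `≤ 2r` and `X^{2r}`-coefficient `a ≥ 0`, then subtracting
`a / λ² · (Leg r)²` (`λ` the leading coefficient of `Leg r`) leaves a polynomial of degree `< 2r`
with the same values at the Gauss points, so the quadrature error of `F` is
`a / λ² · ∫ (Leg r)² ≥ 0`. For `F = p' q` that coefficient is `r a · a / (r + 1)`.
-/

open Polynomial MeasureTheory

/-- `Leg r` is the `r`-th (formal) derivative of `(X² − 1)^r`, a nonzero scalar
multiple of the degree-`r` Legendre polynomial. -/
noncomputable def Leg (r : ℕ) : Polynomial ℝ :=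
  (fun p => Polynomial.derivative p)^[r] ((Polynomial.X ^ 2 - 1) ^ r)

/-- `G 1 < … < G r` are the Gauss points: the roots of `Leg r`, all in `(-1,1)`. -/
def IsGaussPoints (r : ℕ) (G : ℕ → ℝ) : Prop :=
  (∀ k, 1 ≤ k → k < r → G k < G (k + 1)) ∧
  ∀ k, 1 ≤ k → k ≤ r → G k ∈ Set.Ioo (-1 : ℝ) 1 ∧ (Leg r).IsRoot (G k)

/-- `A k = ∫_{-1}^{1} ℓ_k` where `ℓ_k` is the Lagrange basis polynomial of degree
`≤ r - 1` at the Gauss points, i.e. `ℓ_k (G j) = δ_{jk}`. -/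
def IsGaussWeights (r : ℕ) (G A : ℕ → ℝ) : Prop :=
  ∀ k, 1 ≤ k → k ≤ r → ∃ ℓ : Polynomial ℝ,
    ℓ.natDegree ≤ r - 1 ∧
    (∀ j, 1 ≤ j → j ≤ r → ℓ.eval (G j) = if j = k then 1 else 0) ∧
    A k = ∫ x in (-1 : ℝ)..1, ℓ.eval x

theorem integral_eval_add (P Q : ℝ[X]) (a b : ℝ) :
    ∫ x in a..b, (P + Q).eval x = (∫ x in a..b, P.eval x) + ∫ x in a..b, Q.eval x := by
  simp only [eval_add]
  exact intervalIntegral.integral_add (P.continuous.intervalIntegrable _ _)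
    (Q.continuous.intervalIntegrable _ _)

theorem integral_eval_mul_iterate_derivative_eq_zero {a b : ℝ} {w : ℝ[X]} {n : ℕ}
    (ha : (X - C a) ^ n ∣ w) (hb : (X - C b) ^ n ∣ w) {m : ℕ} (hm : m ≤ n) {t : ℝ[X]}
    (ht : t.degree < m) :
    ∫ x in a..b, t.eval x * (derivative^[m] w).eval x = 0 := by
  induction m generalizing t with
  | zero =>
    obtain rfl : t = 0 := by simpa using ht
    simp
  | succ m ih =>
    have isRoot {c : ℝ} (hc : (X - C c) ^ n ∣ w) : (derivative^[m] w).IsRoot c :=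
      dvd_iff_isRoot.mp <| (dvd_pow_self _ (by omega)).trans
        (pow_sub_dvd_iterate_derivative_of_pow_dvd m hc)
    have ht' : (derivative t).degree < m := by
      rw [degree_lt_iff_coeff_zero] at ht ⊢
      intro k hk
      rw [coeff_derivative, ht (k + 1) (by omega), zero_mul]
    rw [Function.iterate_succ_apply', intervalIntegral.integral_mul_deriv_eq_deriv_mul
      (fun x _ => t.hasDerivAt x) (fun x _ => (derivative^[m] w).hasDerivAt x)
      ((derivative t).continuous.intervalIntegrable _ _)
      ((derivative (derivative^[m] w)).continuous.intervalIntegrable _ _),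
      (isRoot ha).eq_zero, (isRoot hb).eq_zero, ih (by omega) ht']
    simp

theorem Leg_eq (r : ℕ) : Leg r = derivative^[r] ((X ^ 2 - 1) ^ r) := rfl

theorem X_sub_C_pow_dvd_X_sq_sub_one_pow {a : ℝ} (ha : a ^ 2 = 1) (r : ℕ) :
    (X - C a) ^ r ∣ ((X ^ 2 - 1) ^ r : ℝ[X]) :=
  pow_dvd_pow_of_dvd (dvd_iff_isRoot.mpr (by simp [ha])) r

theorem integral_eval_mul_Leg_eq_zero {r : ℕ} {t : ℝ[X]} (ht : t.natDegree < r) :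
    ∫ x in (-1 : ℝ)..1, t.eval x * (Leg r).eval x = 0 :=
  integral_eval_mul_iterate_derivative_eq_zero
    (X_sub_C_pow_dvd_X_sq_sub_one_pow (by norm_num) r)
    (X_sub_C_pow_dvd_X_sq_sub_one_pow (by norm_num) r) le_rfl
    (degree_le_natDegree.trans_lt (by exact_mod_cast ht))

theorem monic_X_sq_sub_one_pow (r : ℕ) : ((X ^ 2 - 1) ^ r : ℝ[X]).Monic := by
  simpa using (monic_X_pow_sub_C (1 : ℝ) two_ne_zero).pow r

theorem natDegree_X_sq_sub_one_pow (r : ℕ) : ((X ^ 2 - 1) ^ r : ℝ[X]).natDegree = 2 * r := by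
  rw [natDegree_pow, ← C_1, natDegree_X_pow_sub_C, mul_comm]

theorem Leg_coeff_self (r : ℕ) : (Leg r).coeff r = ((2 * r).descFactorial r : ℝ) := by
  rw [Leg_eq, coeff_iterate_derivative, ← two_mul, ← natDegree_X_sq_sub_one_pow r,
    (monic_X_sq_sub_one_pow r).coeff_natDegree, natDegree_X_sq_sub_one_pow, nsmul_one]

theorem Leg_coeff_self_ne_zero (r : ℕ) : (Leg r).coeff r ≠ 0 := by
  rw [Leg_coeff_self]
  exact_mod_cast (Nat.descFactorial_pos.mpr (by omega)).ne'

theorem Leg_natDegree (r : ℕ) : (Leg r).natDegree = r := by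
  refine le_antisymm ?_ (le_natDegree_of_ne_zero (Leg_coeff_self_ne_zero r))
  have h := natDegree_iterate_derivative ((X ^ 2 - 1) ^ r : ℝ[X]) r
  rwa [natDegree_X_sq_sub_one_pow, two_mul, Nat.add_sub_cancel, ← Leg_eq] at h

theorem natDegree_div_le {K : Type*} [Field K] (p q : K[X]) :
    (p / q).natDegree ≤ p.natDegree - q.natDegree := by
  rcases eq_or_ne q 0 with rfl | hq
  · simp
  rw [div_def]
  refine (natDegree_C_mul_le _ _).trans_eq ?_
  rw [natDegree_divByMonic _ (monic_mul_leadingCoeff_inv hq), natDegree_mul_leadingCoeff_inv _ hq]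

namespace IsGaussPoints

variable {r : ℕ} {G : ℕ → ℝ}

theorem injOn (hG : IsGaussPoints r G) : Set.InjOn G (Finset.Icc 1 r) := by
  rw [Finset.coe_Icc]
  exact (strictMonoOn_of_lt_add_one Set.ordConnected_Icc
    fun k _ hk hk' => hG.1 k hk.1 hk'.2).injOn

theorem isRoot_Leg (hG : IsGaussPoints r G) {k : ℕ} (hk : k ∈ Finset.Icc 1 r) :
    (Leg r).IsRoot (G k) :=
  (hG.2 k (Finset.mem_Icc.1 hk).1 (Finset.mem_Icc.1 hk).2).2

end IsGaussPoints

namespace IsGaussWeights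

variable {r : ℕ} {G A : ℕ → ℝ}

theorem exists_lagrangeBasis (hA : IsGaussWeights r G A) :
    ∃ ℓ : ℕ → ℝ[X], ∀ k ∈ Finset.Icc 1 r, (ℓ k).natDegree ≤ r - 1 ∧
      (∀ j ∈ Finset.Icc 1 r, (ℓ k).eval (G j) = if j = k then 1 else 0) ∧
      A k = ∫ x in (-1 : ℝ)..1, (ℓ k).eval x := by
  have h : ∀ k, ∃ ℓ : ℝ[X], k ∈ Finset.Icc 1 r → ℓ.natDegree ≤ r - 1 ∧
      (∀ j ∈ Finset.Icc 1 r, ℓ.eval (G j) = if j = k then 1 else 0) ∧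
      A k = ∫ x in (-1 : ℝ)..1, ℓ.eval x := by
    intro k
    by_cases hk : k ∈ Finset.Icc 1 r
    · obtain ⟨ℓ, hdeg, heval, hint⟩ := hA k (Finset.mem_Icc.1 hk).1 (Finset.mem_Icc.1 hk).2
      exact ⟨ℓ, fun _ => ⟨hdeg, fun j hj => heval j (Finset.mem_Icc.1 hj).1
        (Finset.mem_Icc.1 hj).2, hint⟩⟩
    · exact ⟨0, fun h => absurd h hk⟩
  choose ℓ hℓ using h
  exact ⟨ℓ, hℓ⟩

theorem integral_eq_sum_of_natDegree_lt (hG : IsGaussPoints r G) (hA : IsGaussWeights r G A)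
    {u : ℝ[X]} (hu : u.natDegree < r) :
    ∫ x in (-1 : ℝ)..1, u.eval x = ∑ k ∈ Finset.Icc 1 r, A k * u.eval (G k) := by
  obtain ⟨ℓ, hℓ⟩ := hA.exists_lagrangeBasis
  have hinterp : u = ∑ k ∈ Finset.Icc 1 r, u.eval (G k) • ℓ k := by
    refine eq_of_degree_sub_lt_of_eval_index_eq _ hG.injOn ?_ fun j hj => ?_
    · refine degree_le_natDegree.trans_lt ?_
      rw [Nat.card_Icc, Nat.add_sub_cancel, Nat.cast_lt]
      refine (natDegree_sub_le _ _).trans_lt (max_lt hu ?_)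
      refine (natDegree_sum_le_of_forall_le _ _ fun k hk => ?_).trans_lt (by omega : r - 1 < r)
      exact (natDegree_smul_le _ _).trans (hℓ k hk).1
    · simp only [eval_finsetSum, eval_smul, smul_eq_mul]
      rw [Finset.sum_eq_single_of_mem j hj fun k hk hkj => by simp [(hℓ k hk).2.1 j hj, hkj.symm]]
      simp [(hℓ j hj).2.1 j hj]
  conv_lhs => rw [hinterp]
  simp only [eval_finsetSum, eval_smul, smul_eq_mul]
  rw [intervalIntegral.integral_finsetSum fun k _ =>
    ((ℓ k).continuous.intervalIntegrable _ _).const_mul _]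
  refine Finset.sum_congr rfl fun k hk => ?_
  rw [intervalIntegral.integral_const_mul, (hℓ k hk).2.2, mul_comm]

theorem integral_eq_sum_of_natDegree_lt_two_mul (hG : IsGaussPoints r G)
    (hA : IsGaussWeights r G A) {s : ℝ[X]} (hs : s.natDegree < 2 * r) :
    ∫ x in (-1 : ℝ)..1, s.eval x = ∑ k ∈ Finset.Icc 1 r, A k * s.eval (G k) := by
  have hmod : (s % Leg r).natDegree < r := by
    simpa [Leg_natDegree] using natDegree_mod_lt s (q := Leg r) (by rw [Leg_natDegree]; omega)
  have hdiv : (s / Leg r).natDegree < r :=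
    (natDegree_div_le s (Leg r)).trans_lt (by rw [Leg_natDegree]; omega)
  calc ∫ x in (-1 : ℝ)..1, s.eval x
      = ∫ x in (-1 : ℝ)..1, (s % Leg r + s / Leg r * Leg r).eval x := by
        rw [EuclideanDomain.mod_add_div']
    _ = ∑ k ∈ Finset.Icc 1 r, A k * (s % Leg r).eval (G k) := by
        simp only [integral_eval_add, eval_mul, integral_eval_mul_Leg_eq_zero hdiv, add_zero,
          integral_eq_sum_of_natDegree_lt hG hA hmod]
    _ = ∑ k ∈ Finset.Icc 1 r, A k * s.eval (G k) := by
        refine Finset.sum_congr rfl fun k hk => ?_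
        conv_rhs => rw [← EuclideanDomain.mod_add_div' s (Leg r)]
        simp [(hG.isRoot_Leg hk).eq_zero]

theorem sum_le_integral (hG : IsGaussPoints r G) (hA : IsGaussWeights r G A) (hr : 0 < r)
    {F : ℝ[X]} (hF : F.natDegree ≤ 2 * r) (hlead : 0 ≤ F.coeff (2 * r)) :
    ∑ k ∈ Finset.Icc 1 r, A k * F.eval (G k) ≤ ∫ x in (-1 : ℝ)..1, F.eval x := by
  set c := F.coeff (2 * r) / (Leg r).coeff r ^ 2
  set s := F - C c * Leg r ^ 2
  have hsq : (Leg r ^ 2).natDegree ≤ 2 * r := natDegree_pow_le_of_le 2 (Leg_natDegree r).le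
  have hs : s.natDegree < 2 * r := by
    have hcoeff : s.coeff (2 * r) = 0 := by
      rw [coeff_sub, coeff_C_mul, coeff_pow_of_natDegree_le (Leg_natDegree r).le,
        div_mul_cancel₀ _ (pow_ne_zero _ (Leg_coeff_self_ne_zero r)), sub_self]
    refine lt_of_le_of_ne ?_ fun h => ?_
    · exact (natDegree_sub_le_of_le hF ((natDegree_C_mul_le _ _).trans hsq)).trans (max_self _).le
    · have : s = 0 := leadingCoeff_eq_zero.1 (by rw [leadingCoeff, h, hcoeff])
      rw [this, natDegree_zero] at h
      omega
  calc ∑ k ∈ Finset.Icc 1 r, A k * F.eval (G k)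
      = ∑ k ∈ Finset.Icc 1 r, A k * s.eval (G k) :=
        Finset.sum_congr rfl fun k hk => by simp [s, (hG.isRoot_Leg hk).eq_zero]
    _ = ∫ x in (-1 : ℝ)..1, s.eval x := (integral_eq_sum_of_natDegree_lt_two_mul hG hA hs).symm
    _ ≤ (∫ x in (-1 : ℝ)..1, s.eval x) + ∫ x in (-1 : ℝ)..1, (C c * Leg r ^ 2).eval x :=
        le_add_of_nonneg_right <| intervalIntegral.integral_nonneg (by norm_num) fun x _ => by
          simp only [eval_mul, eval_C, eval_pow]
          exact mul_nonneg (div_nonneg hlead (sq_nonneg _)) (sq_nonneg _)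
    _ = ∫ x in (-1 : ℝ)..1, F.eval x := by rw [← integral_eval_add, sub_add_cancel]

end IsGaussWeights

theorem natDegree_le_add_one_of_derivative_eq {R : Type*} [Semiring R] [IsAddTorsionFree R]
    {p q : R[X]} {r : ℕ} (hq : derivative q = p) (hp : p.natDegree ≤ r) :
    q.natDegree ≤ r + 1 := by
  have h := natDegree_derivative q
  rw [hq] at h
  omega

theorem coeff_derivative_mul_of_derivative_eq {p q : ℝ[X]} {r : ℕ} (hr : 0 < r)
    (hp : p.natDegree ≤ r) (hq : derivative q = p) :
    (derivative p * q).coeff (2 * r) = r / (r + 1) * p.coeff r ^ 2 := by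
  have hp' : (derivative p).coeff (r - 1) = p.coeff r * r := by
    rw [coeff_derivative, Nat.sub_add_cancel hr, Nat.cast_pred hr, sub_add_cancel]
  have hq' : p.coeff r = q.coeff (r + 1) * (r + 1) := by
    rw [← hq, coeff_derivative]
  rw [show 2 * r = (r - 1) + (r + 1) by omega,
    coeff_mul_add_eq_of_natDegree_le ((natDegree_derivative_le p).trans (by omega))
      (natDegree_le_add_one_of_derivative_eq hq hp), hp', hq']
  field_simp

theorem gauss_quadrature_derivative_antiderivative_general (r : ℕ) (hr : 1 ≤ r) (G A : ℕ → ℝ)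
    (hG : IsGaussPoints r G) (hA : IsGaussWeights r G A)
    (p q F : Polynomial ℝ) (hp : p.natDegree ≤ r)
    (hq : Polynomial.derivative q = p)
    (hF : F = Polynomial.derivative p * q) :
    F.natDegree ≤ 2 * r ∧
    F.coeff (2 * r) = (r : ℝ) / ((r : ℝ) + 1) * (p.coeff r) ^ 2 ∧
    ∑ k ∈ Finset.Icc 1 r, A k * F.eval (G k) ≤ ∫ x in (-1 : ℝ)..1, F.eval x := by
  subst hF
  have hdeg : (derivative p * q).natDegree ≤ 2 * r :=
    (natDegree_mul_le_of_le (natDegree_derivative_le p)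
      (natDegree_le_add_one_of_derivative_eq hq hp)).trans (by omega)
  have hcoeff := coeff_derivative_mul_of_derivative_eq hr hp hq
  refine ⟨hdeg, hcoeff, hA.sum_le_integral hG hr hdeg ?_⟩
  rw [hcoeff]
  positivity

/-- Let `p` be a real polynomial with `deg p ≤ r`, `c ∈ ℝ`,
`q(y) = c + ∫_0^y p(t) dt` (i.e. `q' = p` and `q(0) = c`), and `F = p' ⬝ q`.
Then `deg F ≤ 2r`, the coefficient of `X^{2r}` in `F` is `(r/(r+1))·a²` where `a`
is the coefficient of `X^r` in `p`, and `∫_{−1}^{1} F ≥ Σ_{k=1}^{r} A_k F(G_k)`. -/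
theorem gauss_quadrature_derivative_antiderivative (r : ℕ) (hr : 1 ≤ r) (G A : ℕ → ℝ)
    (hG : IsGaussPoints r G) (hA : IsGaussWeights r G A)
    (p q F : Polynomial ℝ) (c : ℝ) (hp : p.natDegree ≤ r)
    (hq : Polynomial.derivative q = p) (hq0 : q.eval 0 = c)
    (hF : F = Polynomial.derivative p * q) :
    F.natDegree ≤ 2 * r ∧
    F.coeff (2 * r) = (r : ℝ) / ((r : ℝ) + 1) * (p.coeff r) ^ 2 ∧
    ∑ k ∈ Finset.Icc 1 r, A k * F.eval (G k) ≤ ∫ x in (-1 : ℝ)..1, F.eval x :=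
  gauss_quadrature_derivative_antiderivative_general r hr G A hG hA p q F hp hq hF
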